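/- Let G = (L ⊔ R, E) be an (r, Δ, c)-weak expander with c > 0, and let J' ⊆ J ⊆ R with |J| ≤ cr/2. Then Cl(J') ⊆ Cl(J), where Cl(S) denotes the unique maximal (r, S)-contained subset of L. -/

import Mathlib

open Finset

variable {L R : Type*} [Fintype L] [Fintype R] [DecidableEq L] [DecidableEq R]

/-- The set of neighbours of `I ⊆ L` in the bipartite graph with adjacency `A`. -/
def nbhd (A : L → R → Prop) [∀ a b, Decidable (A a b)] (I : Finset L) : Finset R :=
  Finset.univ.filter (fun b => ∃ a ∈ I, A a b)

/-- The boundary of `I ⊆ L`: vertices of `R` adjacent to exactly one vertex of `I`. -/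
def bdry (A : L → R → Prop) [∀ a b, Decidable (A a b)] (I : Finset L) : Finset R :=
  Finset.univ.filter (fun b => (I.filter (fun a => A a b)).card = 1)

/-- Degree of a left vertex. -/
def ldeg (A : L → R → Prop) [∀ a b, Decidable (A a b)] (a : L) : ℕ :=
  (Finset.univ.filter (fun b => A a b)).card

/-- `(r, Δ, c)`-boundary expander. -/
def IsBoundaryExpander (A : L → R → Prop) [∀ a b, Decidable (A a b)] (r Δ : ℕ) (c : ℝ) : Prop :=
  (∀ a : L, ldeg A a ≤ Δ) ∧
  ∀ I : Finset L, I.card ≤ r → c * I.card ≤ ((bdry A I).card : ℝ)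

/-- `I` is `(r, J)`-contained: `|I| ≤ r` and `∂(I) ⊆ J`. -/
def IsContained (A : L → R → Prop) [∀ a b, Decidable (A a b)] (r : ℕ) (J : Finset R) (I : Finset L) : Prop :=
  I.card ≤ r ∧ bdry A I ⊆ J

/-- `I` is a closure of `J`: an `(r, J)`-contained set of maximal size. -/
def IsClosure (A : L → R → Prop) [∀ a b, Decidable (A a b)] (r : ℕ) (J : Finset R) (I : Finset L) : Prop :=
  IsContained A r J I ∧ ∀ I' : Finset L, IsContained A r J I' → I'.card ≤ I.card

/-- `(r, Δ, c)`-weak (boundary) expander. -/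
def IsWeakExpander (A : L → R → Prop) [∀ a b, Decidable (A a b)] (r Δ : ℕ) (c : ℝ) : Prop :=
  (∀ a : L, ldeg A a ≤ Δ) ∧
  (∀ I : Finset L, I.Nonempty → (I.card : ℝ) ≤ r / 2 → (bdry A I).Nonempty) ∧
  (∀ I : Finset L, (r : ℝ) / 2 < I.card → I.card ≤ r → c * I.card ≤ ((bdry A I).card : ℝ))

/-
A closure of `J` fills `J` with at most `r/2` vertices, since a larger contained set would
expand beyond `|J| ≤ cr/2`. Hence the union of `Cl(J)` with any `(r, J)`-contained set has
size at most `r`, and its boundary stays inside `J`; maximality of `Cl(J)` forces the union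
to be `Cl(J)` itself. Apply this to `Cl(J')`, which is `(r, J)`-contained because `J' ⊆ J`.
-/

section

variable (A : L → R → Prop) [∀ a b, Decidable (A a b)]

omit [Fintype L] in
theorem bdry_union_subset (I K : Finset L) : bdry A (I ∪ K) ⊆ bdry A I ∪ bdry A K := by
  intro b hb
  simp only [bdry, mem_union, mem_filter, mem_univ, true_and, filter_union] at hb ⊢
  have hI := card_le_card (subset_union_left (s₁ := I.filter (A · b)) (s₂ := K.filter (A · b)))
  have hK := card_le_card (subset_union_right (s₁ := I.filter (A · b)) (s₂ := K.filter (A · b)))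
  have hIK := card_union_le (I.filter (A · b)) (K.filter (A · b))
  omega

variable {A}

omit [Fintype L] [DecidableEq L] [DecidableEq R] in
theorem IsContained.mono {r : ℕ} {J' J : Finset R} {I : Finset L} (hJJ : J' ⊆ J)
    (hI : IsContained A r J' I) : IsContained A r J I :=
  ⟨hI.1, hI.2.trans hJJ⟩

omit [Fintype L] [DecidableEq L] [DecidableEq R] in
theorem IsContained.card_le_half {r Δ : ℕ} {c : ℝ} {J : Finset R} {I : Finset L} (hc : 0 < c)
    (hexp : IsWeakExpander A r Δ c) (hJ : (J.card : ℝ) ≤ c * r / 2)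
    (hI : IsContained A r J I) : (I.card : ℝ) ≤ r / 2 := by
  by_contra! hlarge
  have hexpand := hexp.2.2 I hlarge hI.1
  have hbdry : ((bdry A I).card : ℝ) ≤ J.card := by exact_mod_cast card_le_card hI.2
  nlinarith

omit [Fintype L] in
theorem IsContained.union {r : ℕ} {J : Finset R} {I K : Finset L}
    (hI : IsContained A r J I) (hK : IsContained A r J K)
    (hIr : (I.card : ℝ) ≤ r / 2) (hKr : (K.card : ℝ) ≤ r / 2) :
    IsContained A r J (I ∪ K) := by
  refine ⟨?_, (bdry_union_subset A I K).trans (union_subset hI.2 hK.2)⟩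
  have hcard : ((I ∪ K).card : ℝ) ≤ I.card + K.card := by exact_mod_cast card_union_le I K
  exact_mod_cast (by linarith : ((I ∪ K).card : ℝ) ≤ r)

omit [Fintype L] [DecidableEq R] in
theorem IsClosure.subset_of_union {r : ℕ} {J : Finset R} {I K : Finset L}
    (hI : IsClosure A r J I) (hIK : IsContained A r J (I ∪ K)) : K ⊆ I :=
  union_eq_left.mp (eq_of_subset_of_card_le subset_union_left (hI.2 _ hIK)).symm

end

/-- In an `(r, Δ, c)`-weak expander, for `J' ⊆ J` with `|J| ≤ cr/2`,
`Cl(J') ⊆ Cl(J)`. -/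
theorem weak_closure_monotone (A : L → R → Prop) [∀ a b, Decidable (A a b)]
    (r Δ : ℕ) (c : ℝ) (hc : 0 < c)
    (hexp : IsWeakExpander A r Δ c)
    (J' J : Finset R) (hJJ : J' ⊆ J) (hJ : (J.card : ℝ) ≤ c * r / 2)
    (I' I : Finset L) (h' : IsClosure A r J' I') (h : IsClosure A r J I) :
    I' ⊆ I := by
  have hI'J : IsContained A r J I' := h'.1.mono hJJ
  exact h.subset_of_union <| h.1.union hI'J (h.1.card_le_half hc hexp hJ)
    (hI'J.card_le_half hc hexp hJ)
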